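/- Let ℓ, n be integers with 2 ≤ ℓ ≤ n, and let p₁, …, p_ℓ ∈ ℝⁿ be in general position. Then the distance-squared mapping D_p : ℝⁿ → ℝ^ℓ, p = (p₁, …, p_ℓ), is 𝒜-equivalent to the map (x₁, …, xₙ) ↦ (x₁, …, x_{ℓ−1}, x_ℓ² + ⋯ + xₙ²). -/

import Mathlib

noncomputable section

open RealInnerProductSpace Module Submodule

/-- The distance-squared mapping `D_p : ℝⁿ → ℝ^ℓ` associated to points `p 0, …, p (ℓ-1) ∈ ℝⁿ`. -/
def DpGen {ℓ n : ℕ} (p : Fin ℓ → EuclideanSpace ℝ (Fin n)) (x : EuclideanSpace ℝ (Fin n)) :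
    EuclideanSpace ℝ (Fin ℓ) :=
  (EuclideanSpace.equiv (Fin ℓ) ℝ).symm (fun i => ‖x - p i‖ ^ 2)

theorem aux_decomp (m n : ℕ) (hmn : m ≤ n) (v : Fin m → EuclideanSpace ℝ (Fin n))
    (hv : LinearIndependent ℝ v) :
    ∃ (Φ : EuclideanSpace ℝ (Fin n) ≃ₗ[ℝ] EuclideanSpace ℝ (Fin n))
      (Q : (Fin m → ℝ) → ℝ),
      ContDiff ℝ (⊤ : ℕ∞) Q ∧
      (∀ z (j : Fin m), Φ z ⟨j, lt_of_lt_of_le j.2 hmn⟩ = ⟪v j, z⟫) ∧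
      (∀ z : EuclideanSpace ℝ (Fin n), ‖z‖ ^ 2 = Q (fun j => ⟪v j, z⟫) +
        ∑ j : Fin n, (if m ≤ (j : ℕ) then (Φ z j) ^ 2 else 0)) := by
  classical
  set V : Submodule ℝ (EuclideanSpace ℝ (Fin n)) := Submodule.span ℝ (Set.range v) with hV
  have hdimV : finrank ℝ V = m := by
    rw [hV, finrank_span_eq_card hv, Fintype.card_fin]
  have hdimO : finrank ℝ Vᗮ = n - m := by
    have h := V.finrank_add_finrank_orthogonal
    rw [hdimV, finrank_euclideanSpace_fin] at h
    omega
  -- index equivalence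
  have hmem : ∀ j : Fin m, v j ∈ V := fun j => Submodule.subset_span (Set.mem_range_self j)
  let ι := {j : Fin n // m ≤ (j : ℕ)}
  let eidx : Fin (finrank ℝ ↥Vᗮ) ≃ ι :=
    (finCongr hdimO).trans
      { toFun := fun k => ⟨⟨(k : ℕ) + m, by omega⟩, by simp⟩
        invFun := fun j => ⟨(j.1 : ℕ) - m, by have := j.2; have := j.1.2; omega⟩
        left_inv := fun k => by ext; simp
        right_inv := fun j => by
          ext
          have := j.2
          simp [Nat.sub_add_cancel this] }
  let ob : OrthonormalBasis ι ℝ ↥Vᗮ := (stdOrthonormalBasis ℝ ↥Vᗮ).reindex eidx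
  let eVec : ι → EuclideanSpace ℝ (Fin n) := fun j => ((ob j : ↥Vᗮ) : EuclideanSpace ℝ (Fin n))
  have heVecMem : ∀ j, eVec j ∈ Vᗮ := fun j => (ob j).2
  -- the map T : V ≃ (Fin m → ℝ)
  let Tl : EuclideanSpace ℝ (Fin n) →ₗ[ℝ] (Fin m → ℝ) :=
    { toFun := fun z => fun j => ⟪v j, z⟫
      map_add' := fun x y => by funext j; simp [inner_add_right]
      map_smul' := fun c x => by funext j; simp [inner_smul_right] }
  -- a vector in V with zero inner products against all v j is zero
  have key0 : ∀ z : EuclideanSpace ℝ (Fin n), z ∈ V → (∀ j : Fin m, ⟪v j, z⟫ = 0) → z = 0 := by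
    intro z hzV hz
    have hzO : z ∈ Vᗮ := by
      rw [Submodule.mem_orthogonal]
      intro u hu
      induction hu using Submodule.span_induction with
      | mem x hx => obtain ⟨j, rfl⟩ := hx; exact hz j
      | zero => simp
      | add x y _ _ hx hy => rw [inner_add_left, hx, hy, add_zero]
      | smul c x _ hx => rw [real_inner_smul_left, hx, mul_zero]
    have : ⟪z, z⟫ = 0 := (Submodule.mem_orthogonal V z).mp hzO z hzV
    exact inner_self_eq_zero.mp this
  have hTvInj : Function.Injective (Tl.comp V.subtype) := by
    rw [← LinearMap.ker_eq_bot, LinearMap.ker_eq_bot']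
    intro u hu
    have hu' : ∀ j : Fin m, ⟪v j, (u : EuclideanSpace ℝ (Fin n))⟫ = 0 := fun j => congrFun hu j
    ext
    rw [key0 u u.2 hu']
    simp
  let Te : V ≃ₗ[ℝ] (Fin m → ℝ) :=
    (Tl.comp V.subtype).linearEquivOfInjective hTvInj
      (by rw [hdimV, Module.finrank_fin_fun])
  have hTe : ∀ (u : V) (j : Fin m), Te u j = ⟪v j, (u : EuclideanSpace ℝ (Fin n))⟫ :=
    fun u j => congrFun ((Tl.comp V.subtype).linearEquivOfInjective_apply hTvInj
      (by rw [hdimV, Module.finrank_fin_fun]) u) j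
  let Q : (Fin m → ℝ) → ℝ := fun t => ‖(Te.symm t : EuclideanSpace ℝ (Fin n))‖ ^ 2
  have hQ : ContDiff ℝ (⊤ : ℕ∞) Q := by
    have h1 : ContDiff ℝ (⊤ : ℕ∞) (fun t : Fin m → ℝ => (Te.symm t : EuclideanSpace ℝ (Fin n))) := by
      exact (V.subtype.comp Te.symm.toLinearMap).toContinuousLinearMap.contDiff
    exact (contDiff_norm_sq ℝ).comp h1
  -- the full linear map Φl
  let Φl : EuclideanSpace ℝ (Fin n) →ₗ[ℝ] EuclideanSpace ℝ (Fin n) :=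
    { toFun := fun z => WithLp.toLp 2 fun j : Fin n =>
        if h : (j : ℕ) < m then ⟪v ⟨j, h⟩, z⟫ else ⟪eVec ⟨j, not_lt.mp h⟩, z⟫
      map_add' := fun x y => by
        ext j
        by_cases h : (j : ℕ) < m <;>
          simp [h, inner_add_right, PiLp.add_apply]
      map_smul' := fun c x => by
        ext j
        by_cases h : (j : ℕ) < m <;>
          simp [h, inner_smul_right, PiLp.smul_apply] }
  have hΦlInj : Function.Injective Φl := by
    rw [← LinearMap.ker_eq_bot, LinearMap.ker_eq_bot']
    intro z hz
    have h1 : ∀ j : Fin m, ⟪v j, z⟫ = 0 := by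
      intro j
      have := congrFun (congrArg WithLp.ofLp hz) ⟨j, lt_of_lt_of_le j.2 hmn⟩
      simpa [Φl, j.2] using this
    have h2 : ∀ j : ι, ⟪eVec j, z⟫ = 0 := by
      intro j
      have := congrFun (congrArg WithLp.ofLp hz) j.1
      simpa [Φl, not_lt.mpr j.2, dif_neg] using this
    have hzV : z ∈ V := by
      rw [← V.orthogonal_orthogonal, Submodule.mem_orthogonal]
      intro w hw
      set w' : ↥Vᗮ := ⟨w, hw⟩ with hw'
      have hrepr : (w' : EuclideanSpace ℝ (Fin n)) = ∑ j : ι, ⟪ob j, w'⟫ • eVec j := by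
        conv_lhs => rw [← ob.sum_repr' w']
        push_cast
        rfl
      calc ⟪w, z⟫ = ⟪(w' : EuclideanSpace ℝ (Fin n)), z⟫ := rfl
        _ = ∑ j : ι, ⟪ob j, w'⟫ * ⟪eVec j, z⟫ := by
            rw [hrepr, sum_inner]
            simp only [real_inner_smul_left]
        _ = 0 := Finset.sum_eq_zero fun j _ => by rw [h2, mul_zero]
    exact key0 z hzV h1
  let Φ : EuclideanSpace ℝ (Fin n) ≃ₗ[ℝ] EuclideanSpace ℝ (Fin n) :=
    Φl.linearEquivOfInjective hΦlInj rfl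
  have hΦ : ∀ (z : EuclideanSpace ℝ (Fin n)) (j : Fin n), Φ z j =
      if h : (j : ℕ) < m then ⟪v ⟨j, h⟩, z⟫ else ⟪eVec ⟨j, not_lt.mp h⟩, z⟫ :=
    fun z j => congrFun (congrArg WithLp.ofLp (Φl.linearEquivOfInjective_apply hΦlInj rfl z)) j
  refine ⟨Φ, Q, hQ, ?_, ?_⟩
  · intro z j
    rw [hΦ, dif_pos (show ((⟨(j:ℕ), lt_of_lt_of_le j.2 hmn⟩ : Fin n) : ℕ) < m from j.2)]
  · intro z
    set u : V := orthogonalProjection V z with hu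
    set w : EuclideanSpace ℝ (Fin n) := z - u with hwdef
    have hw : w ∈ Vᗮ := V.sub_starProjection_mem_orthogonal z
    have hzuw : z = (u : EuclideanSpace ℝ (Fin n)) + w := by simp [hwdef]
    have hinner : ∀ j : Fin m, ⟪v j, z⟫ = ⟪v j, (u : EuclideanSpace ℝ (Fin n))⟫ := by
      intro j
      rw [hzuw, inner_add_right, (Submodule.mem_orthogonal V w).mp hw (v j) (hmem j), add_zero]
    have hQval : Q (fun j => ⟪v j, z⟫) = ‖(u : EuclideanSpace ℝ (Fin n))‖ ^ 2 := by
      have : (fun j => ⟪v j, z⟫) = Te u := by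
        funext j; rw [hTe, hinner]
      rw [this]
      simp [Q]
    have hinner2 : ∀ j : ι, ⟪eVec j, z⟫ = ⟪eVec j, w⟫ := by
      intro j
      rw [hzuw, inner_add_right]
      have : ⟪(u : EuclideanSpace ℝ (Fin n)), eVec j⟫ = 0 :=
        (Submodule.mem_orthogonal V (eVec j)).mp (heVecMem j) _ u.2
      rw [real_inner_comm] at this
      rw [this, zero_add]
    -- sum over j : Fin n with condition equals sum over subtype
    have hsum : ∑ j : Fin n, (if m ≤ (j : ℕ) then (Φ z j) ^ 2 else 0)
        = ∑ j : ι, ⟪eVec j, w⟫ ^ 2 := by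
      rw [← Finset.sum_filter]
      rw [Finset.sum_subtype (Finset.univ.filter (fun j : Fin n => m ≤ (j : ℕ)))
        (p := fun j : Fin n => m ≤ (j : ℕ)) (by simp)
        (f := fun j => (Φ z j) ^ 2)]
      refine Finset.sum_congr rfl fun j _ => ?_
      rw [hΦ, dif_neg (not_lt.mpr j.2), hinner2]
    have hwnorm : ‖w‖ ^ 2 = ∑ j : ι, ⟪eVec j, w⟫ ^ 2 := by
      set w' : ↥Vᗮ := ⟨w, hw⟩ with hw'
      have h1 : ‖w‖ ^ 2 = ⟪w', w'⟫ := by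
        rw [real_inner_self_eq_norm_sq]
        rfl
      rw [h1, ← ob.sum_inner_mul_inner w' w']
      refine Finset.sum_congr rfl fun j _ => ?_
      have : ⟪eVec j, w⟫ = ⟪ob j, w'⟫ := rfl
      rw [this, real_inner_comm w' (ob j), ← sq]
    have horth : ⟪(u : EuclideanSpace ℝ (Fin n)), w⟫ = 0 := (Submodule.mem_orthogonal V w).mp hw _ u.2
    rw [hQval, hsum, ← hwnorm, hzuw, norm_add_sq_real, horth]
    ring

set_option maxHeartbeats 2000000 in
theorem stmt2 (ℓ n : ℕ) (hℓ : 2 ≤ ℓ) (hn : ℓ ≤ n)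
    (p : Fin ℓ → EuclideanSpace ℝ (Fin n))
    -- `p` is in general position: the vectors `p j − p 0`, `j ≠ 0`, are linearly independent
    (hp : LinearIndependent ℝ
      (fun i : {i : Fin ℓ // i ≠ ⟨0, by omega⟩} => p i.1 - p ⟨0, by omega⟩)) :
    ∃ (φ : EuclideanSpace ℝ (Fin n) ≃ EuclideanSpace ℝ (Fin n))
      (ψ : EuclideanSpace ℝ (Fin ℓ) ≃ EuclideanSpace ℝ (Fin ℓ)),
      ContDiff ℝ (⊤ : ℕ∞) φ ∧ ContDiff ℝ (⊤ : ℕ∞) φ.symm ∧ ContDiff ℝ (⊤ : ℕ∞) ψ ∧ ContDiff ℝ (⊤ : ℕ∞) ψ.symm ∧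
      ∀ x : EuclideanSpace ℝ (Fin n),
        ψ (DpGen p (φ.symm x)) =
          (EuclideanSpace.equiv (Fin ℓ) ℝ).symm
            (fun i : Fin ℓ =>
              if (i : ℕ) < ℓ - 1 then x (Fin.castLE hn i)
              else ∑ j : Fin n, (if ℓ - 1 ≤ (j : ℕ) then x j ^ 2 else 0)) := by
  classical
  have h0ℓ : 0 < ℓ := by omega
  let i0 : Fin ℓ := ⟨0, h0ℓ⟩
  let v : Fin (ℓ - 1) → EuclideanSpace ℝ (Fin n) :=
    fun j => p ⟨(j : ℕ) + 1, by have := j.2; omega⟩ - p i0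
  have hv : LinearIndependent ℝ v := by
    have hf : Function.Injective (fun j : Fin (ℓ - 1) =>
        (⟨⟨(j : ℕ) + 1, by have := j.2; omega⟩, by
          simp [Fin.ext_iff]⟩ : {i : Fin ℓ // i ≠ ⟨0, by omega⟩})) := by
      intro a b hab
      have : (a : ℕ) + 1 = (b : ℕ) + 1 := by
        simpa [Subtype.ext_iff, Fin.ext_iff] using hab
      exact Fin.ext (by omega)
    convert hp.comp _ hf using 1
    funext j
    rfl
  obtain ⟨Φ, Q, hQ, ha, hb⟩ := aux_decomp (ℓ - 1) n (by omega) v hv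
  -- the source diffeomorphism
  let φ : EuclideanSpace ℝ (Fin n) ≃ EuclideanSpace ℝ (Fin n) :=
    { toFun := fun x => Φ (x - p i0)
      invFun := fun y => Φ.symm y + p i0
      left_inv := fun x => by simp
      right_inv := fun y => by simp }
  -- the target diffeomorphism
  let A : EuclideanSpace ℝ (Fin ℓ) → (Fin (ℓ - 1) → ℝ) :=
    fun y j => (y i0 - y ⟨(j : ℕ) + 1, by have := j.2; omega⟩ + ‖v j‖ ^ 2) / 2
  let B : EuclideanSpace ℝ (Fin ℓ) → ℝ :=
    fun w => w ⟨ℓ - 1, by omega⟩ + Q (fun j => w ⟨(j : ℕ), by have := j.2; omega⟩)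
  let ψf : EuclideanSpace ℝ (Fin ℓ) → EuclideanSpace ℝ (Fin ℓ) :=
    fun y => WithLp.toLp 2 fun i : Fin ℓ =>
      if h : (i : ℕ) < ℓ - 1 then A y ⟨(i : ℕ), h⟩ else y i0 - Q (A y)
  let ψg : EuclideanSpace ℝ (Fin ℓ) → EuclideanSpace ℝ (Fin ℓ) :=
    fun w => WithLp.toLp 2 fun i : Fin ℓ =>
      if 1 ≤ (i : ℕ) then
        B w + ‖v ⟨(i : ℕ) - 1, by have := i.2; omega⟩‖ ^ 2
          - 2 * w ⟨(i : ℕ) - 1, by have := i.2; omega⟩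
      else B w
  -- basic computation lemmas
  have hg0 : ∀ w, ψg w i0 = B w := fun w => by
    dsimp only [ψg, WithLp.ofLp_toLp]
    exact if_neg (Nat.not_succ_le_zero 0)
  have hg1 : ∀ w (j : Fin (ℓ - 1)),
      ψg w ⟨(j : ℕ) + 1, by have := j.2; omega⟩
        = B w + ‖v j‖ ^ 2 - 2 * w ⟨(j : ℕ), by have := j.2; omega⟩ := by
    intro w j
    dsimp only [ψg, WithLp.ofLp_toLp]
    rw [if_pos (Nat.succ_le_succ (Nat.zero_le _))]
    have e2 : (⟨(j : ℕ) + 1 - 1, by have := j.2; omega⟩ : Fin ℓ)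
        = (⟨(j : ℕ), by have := j.2; omega⟩ : Fin ℓ) := Fin.ext (show (j : ℕ) + 1 - 1 = (j : ℕ) by omega)
    rw [e2]
    simp only [Nat.add_sub_cancel, Fin.eta]
  have hf_lt : ∀ y (j : Fin (ℓ - 1)),
      ψf y ⟨(j : ℕ), by have := j.2; omega⟩ = A y j := by
    intro y j
    show dite _ _ _ = _
    rw [dif_pos (show ((⟨(j : ℕ), by have := j.2; omega⟩ : Fin ℓ) : ℕ) < ℓ - 1 from j.2)]
  have hf_last : ∀ y, ψf y ⟨ℓ - 1, by omega⟩ = y i0 - Q (A y) :=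
    fun y => dif_neg (lt_irrefl _)
  have hBf : ∀ y, B (ψf y) = y i0 := by
    intro y
    show ψf y ⟨ℓ - 1, by omega⟩ + Q (fun j => ψf y ⟨(j : ℕ), by have := j.2; omega⟩) = y i0
    rw [hf_last]
    have h1 : (fun j : Fin (ℓ - 1) => ψf y ⟨(j : ℕ), by have := j.2; omega⟩) = A y :=
      funext fun j => hf_lt y j
    rw [h1]
    ring
  have hgA : ∀ w (j : Fin (ℓ - 1)),
      A (ψg w) j = w ⟨(j : ℕ), by have := j.2; omega⟩ := by
    intro w j
    show (ψg w i0 - ψg w ⟨(j : ℕ) + 1, by have := j.2; omega⟩ + ‖v j‖ ^ 2) / 2 = _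
    rw [hg0, hg1]
    ring
  -- ψ is an equivalence
  have hleft : ∀ y, ψg (ψf y) = y := by
    intro y
    ext i
    by_cases h : 1 ≤ (i : ℕ)
    · show (if 1 ≤ (i : ℕ) then _ else _) = y i
      rw [if_pos h, hBf]
      have h2 : ψf y ⟨(i : ℕ) - 1, by have := i.2; omega⟩
          = A y ⟨(i : ℕ) - 1, by have := i.2; omega⟩ :=
        hf_lt y ⟨(i : ℕ) - 1, by have := i.2; omega⟩
      rw [h2]
      show y i0 + ‖v _‖ ^ 2 - 2 * ((y i0 - y ⟨(i : ℕ) - 1 + 1, _⟩ + ‖v _‖ ^ 2) / 2) = y i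
      have h3 : (⟨(i : ℕ) - 1 + 1, by have := i.2; omega⟩ : Fin ℓ) = i :=
        Fin.ext (by simp; omega)
      rw [h3]
      ring
    · show (if 1 ≤ (i : ℕ) then _ else _) = y i
      rw [if_neg h]
      refine (hBf y).trans ?_
      have : i = i0 := Fin.ext (by simp [i0]; omega)
      rw [this]
  have hright : ∀ w, ψf (ψg w) = w := by
    intro w
    ext i
    by_cases h : (i : ℕ) < ℓ - 1
    · show dite _ _ _ = w i
      rw [dif_pos h, hgA]
    · show dite _ _ _ = w i
      rw [dif_neg h, hg0]
      have h1 : (fun j : Fin (ℓ - 1) => A (ψg w) j)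
          = fun j : Fin (ℓ - 1) => w ⟨(j : ℕ), by have := j.2; omega⟩ :=
        funext fun j => hgA w j
      show B w - Q (A (ψg w)) = w i
      rw [show A (ψg w) = fun j : Fin (ℓ - 1) => w ⟨(j : ℕ), by have := j.2; omega⟩ from h1]
      show w ⟨ℓ - 1, by omega⟩ + Q _ - Q _ = w i
      have h2 : (⟨ℓ - 1, by omega⟩ : Fin ℓ) = i := Fin.ext (by have := i.2; simp; omega)
      rw [h2]
      ring
  let ψ : EuclideanSpace ℝ (Fin ℓ) ≃ EuclideanSpace ℝ (Fin ℓ) :=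
    { toFun := ψf, invFun := ψg, left_inv := hleft, right_inv := hright }
  -- smoothness
  have hproj : ∀ i : Fin ℓ, ContDiff ℝ (⊤ : ℕ∞) (fun y : EuclideanSpace ℝ (Fin ℓ) => y i) :=
    fun i => contDiff_euclidean.mp contDiff_id i
  have hprojn : ∀ i : Fin n, ContDiff ℝ (⊤ : ℕ∞) (fun y : EuclideanSpace ℝ (Fin n) => y i) :=
    fun i => contDiff_euclidean.mp contDiff_id i
  have hA : ContDiff ℝ (⊤ : ℕ∞) A := by
    apply contDiff_pi.mpr
    intro j
    exact (((hproj i0).sub (hproj _)).add contDiff_const).div_const 2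
  have hB : ContDiff ℝ (⊤ : ℕ∞) B :=
    (hproj _).add (hQ.comp (contDiff_pi.mpr fun j => hproj _))
  have hΦc : ContDiff ℝ (⊤ : ℕ∞) (fun x : EuclideanSpace ℝ (Fin n) => Φ x) :=
    (LinearMap.toContinuousLinearMap Φ.toLinearMap).contDiff
  have hΦsc : ContDiff ℝ (⊤ : ℕ∞) (fun x : EuclideanSpace ℝ (Fin n) => Φ.symm x) :=
    (LinearMap.toContinuousLinearMap Φ.symm.toLinearMap).contDiff
  have hφ : ContDiff ℝ (⊤ : ℕ∞) φ := hΦc.comp (contDiff_id.sub contDiff_const)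
  have hφs : ContDiff ℝ (⊤ : ℕ∞) φ.symm := hΦsc.add contDiff_const
  have hψ : ContDiff ℝ (⊤ : ℕ∞) ψ := by
    apply contDiff_euclidean.mpr
    intro i
    by_cases h : (i : ℕ) < ℓ - 1
    · have : (fun y : EuclideanSpace ℝ (Fin ℓ) => ψ y i)
          = fun y => A y ⟨(i : ℕ), h⟩ := funext fun y => dif_pos h
      rw [this]
      exact (contDiff_pi.mp hA) _
    · have : (fun y : EuclideanSpace ℝ (Fin ℓ) => ψ y i)
          = fun y => y i0 - Q (A y) := funext fun y => dif_neg h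
      rw [this]
      exact (hproj i0).sub (hQ.comp hA)
  have hψs : ContDiff ℝ (⊤ : ℕ∞) ψ.symm := by
    apply contDiff_euclidean.mpr
    intro i
    by_cases h : 1 ≤ (i : ℕ)
    · have : (fun w : EuclideanSpace ℝ (Fin ℓ) => ψ.symm w i)
          = fun w => B w + ‖v ⟨(i : ℕ) - 1, by have := i.2; omega⟩‖ ^ 2
              - 2 * w ⟨(i : ℕ) - 1, by have := i.2; omega⟩ := funext fun w => if_pos h
      rw [this]
      exact (hB.add contDiff_const).sub (contDiff_const.mul (hproj _))
    · have : (fun w : EuclideanSpace ℝ (Fin ℓ) => ψ.symm w i)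
          = fun w => B w := funext fun w => if_neg h
      rw [this]
      exact hB
  refine ⟨φ, ψ, hφ, hφs, hψ, hψs, ?_⟩
  intro x
  set z : EuclideanSpace ℝ (Fin n) := Φ.symm x with hzdef
  have hΦz : ∀ j : Fin n, Φ z j = x j := fun j => by rw [Φ.apply_symm_apply]
  have hvz : ∀ j : Fin (ℓ - 1), ⟪v j, z⟫ = x ⟨(j : ℕ), by have := j.2; omega⟩ :=
    fun j => (ha z j).symm.trans (hΦz _)
  set y : EuclideanSpace ℝ (Fin ℓ) := DpGen p (φ.symm x) with hydef
  have hy : ∀ i : Fin ℓ, y i = ‖z + p i0 - p i‖ ^ 2 := fun i => rfl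
  have hy0 : y i0 = ‖z‖ ^ 2 := by rw [hy, add_sub_cancel_right]
  have hyj : ∀ j : Fin (ℓ - 1),
      y ⟨(j : ℕ) + 1, by have := j.2; omega⟩
        = ‖z‖ ^ 2 - 2 * x ⟨(j : ℕ), by have := j.2; omega⟩ + ‖v j‖ ^ 2 := by
    intro j
    rw [hy]
    have h1 : z + p i0 - p ⟨(j : ℕ) + 1, by have := j.2; omega⟩ = z - v j := by
      show _ = z - (p ⟨(j : ℕ) + 1, by have := j.2; omega⟩ - p i0)
      abel
    rw [h1, norm_sub_sq_real, real_inner_comm, hvz]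
  have hAy : ∀ j : Fin (ℓ - 1), A y j = x ⟨(j : ℕ), by have := j.2; omega⟩ := by
    intro j
    show (y i0 - y ⟨(j : ℕ) + 1, by have := j.2; omega⟩ + ‖v j‖ ^ 2) / 2 = _
    rw [hy0, hyj]
    ring
  ext i
  show ψf y i = if (i : ℕ) < ℓ - 1 then x (Fin.castLE hn i)
      else ∑ j : Fin n, (if ℓ - 1 ≤ (j : ℕ) then x j ^ 2 else 0)
  by_cases h : (i : ℕ) < ℓ - 1
  · show dite _ _ _ = _
    rw [dif_pos h, if_pos h, hAy]
    exact congrArg x (Fin.ext rfl)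
  · show dite _ _ _ = _
    rw [dif_neg h, if_neg h, hy0]
    have h1 : A y = fun j : Fin (ℓ - 1) => ⟪v j, z⟫ := by
      funext j
      rw [hAy, hvz]
    rw [h1, hb z]
    have h2 : ∀ j : Fin n, (if ℓ - 1 ≤ (j : ℕ) then (Φ z j) ^ 2 else 0)
        = (if ℓ - 1 ≤ (j : ℕ) then x j ^ 2 else 0) := by
      intro j
      rw [hΦz]
    rw [Finset.sum_congr rfl fun j _ => h2 j]
    ring
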